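/- arXiv:math/0110315 — 5 statements merged into one kernel-verified Lean document; each statement's English description precedes it below -/
import Mathlib

section
/- Let e₁,…,eₙ be orthogonal projections in Z = 𝔏(H) with eⱼeₖ = 0 for j ≠ k, and set p := e₁ + ⋯ + eₙ. An operator u ∈ Z satisfies pu + up = u (i.e. u ∈ Z_{1/2}(p)) if and only if there exist u₁,…,uₙ ∈ Z with u = u₁ + ⋯ + uₙ, eₖuₖ + uₖeₖ = uₖ (i.e. uₖ ∈ Z_{1/2}(eₖ)) for each k, and eⱼuₖ = uₖeⱼ = 0 for all j ≠ k. In that case necessarily uₖ = eₖu + ueₖ, and if u is selfadjoint then each uₖ is selfadjoint. -/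
/-! Setting: `H` is a complex Hilbert space, `Z = 𝔏(H)` the C*-algebra of bounded
linear operators on `H`, regarded as a JB*-triple with product
`{a b c} = (a b* c + c b* a)/2`. -/

variable {H : Type*} [NormedAddCommGroup H] [InnerProductSpace ℂ H] [CompleteSpace H]

/-- A family of pairwise orthogonal (selfadjoint idempotent) projections in `𝔏(H)`. -/
def IsOrthProjFamily {n : ℕ} (e : Fin n → H →L[ℂ] H) : Prop :=
  (∀ k, star (e k) = e k) ∧ (∀ k, e k * e k = e k) ∧ ∀ j k, j ≠ k → e j * e k = 0

/-- Membership in the set `M(n,Λ,R)`: `a = ∑ₖ Λ k • e k` for some family of nonzero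
pairwise orthogonal projections `e k` of finite rank `R k`. -/
def MemberM (n : ℕ) (Λ : Fin n → ℂ) (R : Fin n → ℕ) (a : H →L[ℂ] H) : Prop :=
  ∃ e : Fin n → H →L[ℂ] H, IsOrthProjFamily e ∧
    (∀ k, FiniteDimensional ℂ (LinearMap.range ((e k) : H →ₗ[ℂ] H)) ∧
      Module.finrank ℂ (LinearMap.range ((e k) : H →ₗ[ℂ] H)) = R k) ∧
    a = ∑ k, Λ k • e k

/-- The JB*-triple product of `𝔏(H)`: `{x y z} = (x y* z + z y* x)/2`. -/
noncomputable def tp (x y z : H →L[ℂ] H) : H →L[ℂ] H :=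
  (1/2 : ℂ) • (x * star y * z + z * star y * x)

/-- For `p = e₁ + ⋯ + eₙ` (a sum of pairwise orthogonal projections),
an operator `u` lies in `Z_{1/2}(p)` iff it decomposes as `u = ∑ uₖ` with
`uₖ ∈ Z_{1/2}(eₖ)` and `eⱼuₖ = uₖeⱼ = 0` for `j ≠ k`; in that case necessarily
`uₖ = eₖu + ueₖ`, and if `u` is selfadjoint then so is each `uₖ`. -/
theorem peirceHalf_of_sum_of_projections
    (n : ℕ) (e : Fin n → H →L[ℂ] H) (he : IsOrthProjFamily e)
    (p : H →L[ℂ] H) (hp : p = ∑ k, e k) (u : H →L[ℂ] H) :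
    ((p * u + u * p = u) ↔
      ∃ v : Fin n → H →L[ℂ] H, u = ∑ k, v k ∧
        (∀ k, e k * v k + v k * e k = v k) ∧
        ∀ j k, j ≠ k → e j * v k = 0 ∧ v k * e j = 0) ∧
    (∀ v : Fin n → H →L[ℂ] H,
      u = ∑ k, v k → (∀ k, e k * v k + v k * e k = v k) →
      (∀ j k, j ≠ k → e j * v k = 0 ∧ v k * e j = 0) →
      ∀ k, v k = e k * u + u * e k) ∧
    (p * u + u * p = u → star u = u →
      ∀ k, star (e k * u + u * e k) = e k * u + u * e k) := by
  obtain ⟨hs, hi, ho⟩ := he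
  have hep : ∀ k, e k * p = e k := by
    intro k
    rw [hp, Finset.mul_sum, Finset.sum_eq_single k]
    · exact hi k
    · intro j _ hj; exact ho k j (Ne.symm hj)
    · intro h; exact absurd (Finset.mem_univ k) h
  have hpe : ∀ k, p * e k = e k := by
    intro k
    rw [hp, Finset.sum_mul, Finset.sum_eq_single k]
    · exact hi k
    · intro j _ hj; exact ho j k hj
    · intro h; exact absurd (Finset.mem_univ k) h
  have key : ∀ (_ : p * u + u * p = u) (j k : Fin n), e j * u * e k = 0 := by
    intro h j k
    have h1 : e j * (p * u + u * p) * e k = e j * u * e k := by rw [h]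
    have a1 : e j * (p * u) * e k = e j * u * e k := by
      rw [← mul_assoc (e j) p u, hep j]
    have a2 : e j * (u * p) * e k = e j * u * e k := by
      rw [← mul_assoc (e j) u p, mul_assoc (e j * u) p (e k), hpe k]
    have h2 : e j * (p * u + u * p) * e k = e j * u * e k + e j * u * e k := by
      rw [mul_add, add_mul, a1, a2]
    exact add_eq_left.mp (h2.symm.trans h1)
  refine ⟨⟨fun h => ?_, fun hex => ?_⟩, fun v hv hhalf horth k => ?_, fun h hu k => ?_⟩
  · refine ⟨fun k => e k * u + u * e k, ?_, fun k => ?_, fun j k hjk => ⟨?_, ?_⟩⟩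
    · rw [Finset.sum_add_distrib, ← Finset.sum_mul, ← Finset.mul_sum, ← hp, h]
    · have hk0 : e k * (u * e k) = 0 := by rw [← mul_assoc]; exact key h k k
      rw [mul_add, add_mul, ← mul_assoc (e k) (e k) u, hi k, hk0, key h k k,
        mul_assoc u (e k) (e k), hi k, add_zero, zero_add]
    · rw [mul_add, ← mul_assoc, ho j k hjk, zero_mul, zero_add, ← mul_assoc, key h j k]
    · rw [add_mul, key h k j, zero_add, mul_assoc, ho k j (Ne.symm hjk), mul_zero]
  · obtain ⟨v, hv, hhalf, horth⟩ := hex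
    have h1 : ∀ j, e j * ∑ k, v k = e j * v j := by
      intro j
      rw [Finset.mul_sum, Finset.sum_eq_single j]
      · intro k _ hk; exact (horth j k (Ne.symm hk)).1
      · intro hh; exact absurd (Finset.mem_univ j) hh
    have h2 : ∀ j, (∑ k, v k) * e j = v j * e j := by
      intro j
      rw [Finset.sum_mul, Finset.sum_eq_single j]
      · intro k _ hk; exact (horth j k (Ne.symm hk)).2
      · intro hh; exact absurd (Finset.mem_univ j) hh
    subst hv
    rw [hp, Finset.sum_mul, Finset.mul_sum]
    calc (∑ j, e j * ∑ k, v k) + ∑ j, (∑ k, v k) * e j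
        = (∑ j, e j * v j) + ∑ j, v j * e j := by
          congr 1
          · exact Finset.sum_congr rfl fun j _ => h1 j
          · exact Finset.sum_congr rfl fun j _ => h2 j
      _ = ∑ j, (e j * v j + v j * e j) := (Finset.sum_add_distrib).symm
      _ = ∑ j, v j := Finset.sum_congr rfl fun j _ => hhalf j
  · have h1 : e k * u = e k * v k := by
      rw [hv, Finset.mul_sum, Finset.sum_eq_single k]
      · intro j _ hj; exact (horth k j (Ne.symm hj)).1
      · intro hh; exact absurd (Finset.mem_univ k) hh
    have h2 : u * e k = v k * e k := by
      rw [hv, Finset.sum_mul, Finset.sum_eq_single k]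
      · intro j _ hj; exact (horth k j (Ne.symm hj)).2
      · intro hh; exact absurd (Finset.mem_univ k) hh
    rw [h1, h2, hhalf k]
  · rw [star_add, star_mul, star_mul, hs k, hu, add_comm]
end

section
/- Let p ∈ Z = 𝔏(H) be an orthogonal projection and let u ∈ Z_{1/2}(p), i.e. pu + up = u. Consider the bounded real-linear map δ : Z → Z, δ(z) := {puz} − {upz}. Then δ is an inner C*-derivation of Z — that is, there exists c ∈ Z with c* = −c such that δ(z) = cz − zc for all z ∈ Z — if and only if u is selfadjoint (u* = u); in that case c = (pu − up)/2 works. -/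
/-! Setting: `H` is a complex Hilbert space, `Z = 𝔏(H)` the C*-algebra of bounded
linear operators on `H`, regarded as a JB*-triple with product
`{a b c} = (a b* c + c b* a)/2`. -/

variable {H : Type*} [NormedAddCommGroup H] [InnerProductSpace ℂ H] [CompleteSpace H]

/-- For a projection `p` and `u ∈ Z_{1/2}(p)`, the map
`δ(z) = {puz} − {upz}` is an inner C*-derivation (implemented by a skew-adjoint `c`)
iff `u` is selfadjoint, in which case `c = (pu − up)/2` works. -/
theorem g_is_inner_Cstar_derivation_iff_selfadjoint
    (p u : H →L[ℂ] H) (hps : star p = p) (hpi : p * p = p)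
    (hu : p * u + u * p = u) :
    ((∃ c : H →L[ℂ] H, star c = -c ∧
        ∀ z : H →L[ℂ] H, tp p u z - tp u p z = c * z - z * c) ↔ star u = u) ∧
    (star u = u →
      star ((1/2 : ℂ) • (p * u - u * p)) = -((1/2 : ℂ) • (p * u - u * p)) ∧
      ∀ z : H →L[ℂ] H, tp p u z - tp u p z =
        ((1/2 : ℂ) • (p * u - u * p)) * z - z * ((1/2 : ℂ) • (p * u - u * p))) := by
  have hust : p * star u + star u * p = star u := by
    have h := congrArg star hu
    simp only [star_add, star_mul, hps] at h
    rw [add_comm]; exact h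
  have key : star u = u →
      star ((1/2 : ℂ) • (p * u - u * p)) = -((1/2 : ℂ) • (p * u - u * p)) ∧
      ∀ z : H →L[ℂ] H, tp p u z - tp u p z =
        ((1/2 : ℂ) • (p * u - u * p)) * z - z * ((1/2 : ℂ) • (p * u - u * p)) := by
    intro hsu
    constructor
    · rw [star_smul, star_sub, star_mul, star_mul, hps, hsu, ← smul_neg]
      norm_num
    · intro z
      rw [tp, tp, hps, hsu, smul_mul_assoc, mul_smul_comm, ← smul_sub, ← smul_sub]
      congr 1
      noncomm_ring
  refine ⟨⟨?_, fun hsu => ⟨(1/2 : ℂ) • (p * u - u * p), (key hsu).1, (key hsu).2⟩⟩, key⟩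
  rintro ⟨c, hc, h⟩
  have h1 := h 1
  simp only [tp, mul_one, one_mul, hps, mul_one, sub_self] at h1
  rw [hust] at h1
  have h2 : u * p + p * u = u := by rw [add_comm]; exact hu
  rw [h2] at h1
  rw [sub_eq_zero] at h1
  exact smul_right_injective _ (by norm_num : (1/2 : ℂ) ≠ 0) h1
end

section
/- Let a = Σₖ λₖeₖ ∈ M(n,Λ,R), let p := supp a = e₁ + ⋯ + eₙ, and define Φ_a : Z → Z by Φ_a(x) := {pxa} − {xpa}. Then Φ_a maps Z_{1/2}(p) into itself; explicitly, Φ_a(u) = −(1/2) Σₖ λₖ(eₖu + ueₖ) for every u ∈ Z_{1/2}(p), and the restriction of Φ_a to the closed subspace Z_{1/2}(p) is a surjective complex-linear homeomorphism of Z_{1/2}(p) (a bounded complex-linear bijection with bounded inverse). -/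
/-! Setting: `H` is a complex Hilbert space, `Z = 𝔏(H)` the C*-algebra of bounded
linear operators on `H`, regarded as a JB*-triple with product
`{a b c} = (a b* c + c b* a)/2`. -/

variable {H : Type*} [NormedAddCommGroup H] [InnerProductSpace ℂ H] [CompleteSpace H]

/-- The Peirce 1/2-space `Z_{1/2}(p) = {z : pz + zp = z}` of a projection `p`,
as a (closed) complex subspace of `𝔏(H)`. -/
def peirceHalf (p : H →L[ℂ] H) : Submodule ℂ (H →L[ℂ] H) where
  carrier := {z | p * z + z * p = z}
  add_mem' := by
    intro a b ha hb
    simp only [Set.mem_setOf_eq] at ha hb ⊢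
    have h : p * (a + b) + (a + b) * p = (p * a + a * p) + (p * b + b * p) := by
      noncomm_ring
    rw [h, ha, hb]
  zero_mem' := by simp
  smul_mem' := by
    intro c a ha
    simp only [Set.mem_setOf_eq] at ha ⊢
    rw [mul_smul_comm, smul_mul_assoc, ← smul_add, ha]

/-! On `Z_{1/2}(p)` one has `p u p = 0`. Since `a` lies in the corner `p Z p`, the terms
`p u* a` and `a u* p` of `{p u a}` vanish and `Φ_a(u) = -(u a + a u)/2`. The element
`b = ∑ λₖ⁻¹ eₖ` inverts `a` in `p Z p`, and for `v ∈ Z_{1/2}(p)` the cross terms `b v a`, `a v b`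
vanish as well, so `v ↦ v b + b v` inverts `u ↦ u a + a u` on `Z_{1/2}(p)`: the restriction of
`Φ_a` is a linear homeomorphism with inverse `v ↦ -2 (v b + b v)`. -/

namespace IsIdempotentElem

variable {R : Type*} [NonUnitalRing R] {p u v a b : R}

theorem mul_mul_self_eq_zero_of_peirceHalf (hp : IsIdempotentElem p)
    (hu : p * u + u * p = u) : p * u * p = 0 := by
  have h := congrArg (p * ·) hu
  simp only [mul_add, ← mul_assoc, hp.eq] at h
  exact add_eq_left.mp h

theorem mul_mul_eq_zero_of_peirceHalf_left (hp : IsIdempotentElem p)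
    (hu : p * u + u * p = u) (hpa : p * a = a) : p * u * a = 0 := by
  rw [← hpa, ← mul_assoc, hp.mul_mul_self_eq_zero_of_peirceHalf hu, zero_mul]

theorem mul_mul_eq_zero_of_peirceHalf_right (hp : IsIdempotentElem p)
    (hu : p * u + u * p = u) (hap : a * p = a) : a * u * p = 0 := by
  rw [← hap, mul_assoc a, mul_assoc a, hp.mul_mul_self_eq_zero_of_peirceHalf hu,
    mul_zero]

theorem peirceHalf_mul_add_mul (hp : IsIdempotentElem p) (hu : p * u + u * p = u)
    (hpa : p * a = a) (hap : a * p = a) :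
    p * (u * a + a * u) + (u * a + a * u) * p = u * a + a * u := by
  simp only [mul_add, add_mul, ← mul_assoc, hpa, hp.mul_mul_eq_zero_of_peirceHalf_left hu hpa,
    hp.mul_mul_eq_zero_of_peirceHalf_right hu hap]
  rw [mul_assoc u, hap]
  abel

theorem anticomm_anticomm_eq_self_of_peirceHalf (hp : IsIdempotentElem p)
    (hv : p * v + v * p = v) (hpa : p * a = a) (hap : a * p = a) (hpb : p * b = b)
    (hbp : b * p = b) (hab : a * b = p) (hba : b * a = p) :
    (v * b + b * v) * a + a * (v * b + b * v) = v := by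
  have hbva : b * v * a = 0 := by
    rw [← hbp, mul_assoc b, mul_assoc b,
      hp.mul_mul_eq_zero_of_peirceHalf_left hv hpa, mul_zero]
  have havb : a * v * b = 0 := by
    rw [← hpb, ← mul_assoc, hp.mul_mul_eq_zero_of_peirceHalf_right hv hap, zero_mul]
  calc (v * b + b * v) * a + a * (v * b + b * v)
      = v * (b * a) + b * v * a + a * v * b + (a * b) * v := by noncomm_ring
    _ = v := by rw [hba, hbva, havb, hab, add_zero, add_zero, add_comm]; exact hv

end IsIdempotentElem

theorem Finset.sum_smul_mul_sum_smul_of_orthogonal {ι 𝕜 A : Type*} [CommSemiring 𝕜]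
    [Semiring A] [Algebra 𝕜 A] {s : Finset ι} {e : ι → A} (hidem : ∀ i, e i * e i = e i)
    (horth : ∀ i j, i ≠ j → e i * e j = 0) (c d : ι → 𝕜) :
    (∑ i ∈ s, c i • e i) * (∑ i ∈ s, d i • e i) = ∑ i ∈ s, (c i * d i) • e i := by
  rw [Finset.sum_mul]
  refine Finset.sum_congr rfl fun i hi => ?_
  rw [Finset.mul_sum, Finset.sum_eq_single_of_mem i hi fun j _ hji => ?_,
    smul_mul_smul_comm, hidem]
  rw [smul_mul_smul_comm, horth i j hji.symm, smul_zero]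

theorem ContinuousLinearMap.exists_equiv_restrict {R M N : Type*} [Semiring R]
    [TopologicalSpace M] [AddCommMonoid M] [Module R M]
    [TopologicalSpace N] [AddCommMonoid N] [Module R N]
    {V : Submodule R M} {W : Submodule R N} (f : M →L[R] N) (g : N →L[R] M)
    (hf : ∀ x ∈ V, f x ∈ W) (hg : ∀ y ∈ W, g y ∈ V)
    (hgf : ∀ x ∈ V, g (f x) = x) (hfg : ∀ y ∈ W, f (g y) = y) :
    ∃ Ψ : V ≃L[R] W, ∀ x : V, (Ψ x : N) = f x :=
  ⟨.equivOfInverse (f.restrict hf) (g.restrict hg) (fun x => Subtype.ext (hgf x x.2))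
    (fun y => Subtype.ext (hfg y y.2)), fun _ => rfl⟩

section anticommL

variable (𝕜 : Type*) {A : Type*} [NontriviallyNormedField 𝕜] [NonUnitalSeminormedRing A]
  [NormedSpace 𝕜 A] [IsScalarTower 𝕜 A A] [SMulCommClass 𝕜 A A]

noncomputable def anticommL (a : A) : A →L[𝕜] A :=
  (ContinuousLinearMap.mul 𝕜 A).flip a + ContinuousLinearMap.mul 𝕜 A a

@[simp]
theorem anticommL_apply (a x : A) : anticommL 𝕜 a x = x * a + a * x :=
  rfl

end anticommL

section peirceHalf

variable {p a b u : H →L[ℂ] H}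

theorem star_mem_peirceHalf (hp : IsSelfAdjoint p) (hu : u ∈ peirceHalf p) :
    star u ∈ peirceHalf p := by
  have h := congrArg star (hu : p * u + u * p = u)
  rw [star_add, star_mul, star_mul, hp.star_eq, add_comm] at h
  exact h

theorem tp_sub_tp_of_mem_peirceHalf (hp : IsStarProjection p) (hpa : p * a = a)
    (hap : a * p = a) (hu : u ∈ peirceHalf p) :
    tp p u a - tp u p a = -((1/2 : ℂ) • (u * a + a * u)) := by
  have hu' := star_mem_peirceHalf hp.isSelfAdjoint hu
  rw [tp, tp, hp.isIdempotentElem.mul_mul_eq_zero_of_peirceHalf_left hu' hpa,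
    hp.isIdempotentElem.mul_mul_eq_zero_of_peirceHalf_right hu' hap, hp.isSelfAdjoint.star_eq,
    mul_assoc u, hpa, hap, zero_add, smul_zero, zero_sub]

theorem exists_continuousLinearEquiv_peirceHalf_anticomm (hp : IsIdempotentElem p)
    (hpa : p * a = a) (hap : a * p = a) (hpb : p * b = b) (hbp : b * p = b) (hab : a * b = p)
    (hba : b * a = p) :
    ∃ Ψ : peirceHalf p ≃L[ℂ] peirceHalf p,
      ∀ u : peirceHalf p, (Ψ u : H →L[ℂ] H) = -((1/2 : ℂ) • (u * a + a * u)) := by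
  have hmaps : ∀ c : H →L[ℂ] H, p * c = c → c * p = c → ∀ t : ℂ,
      ∀ u ∈ peirceHalf p, (t • anticommL ℂ c) u ∈ peirceHalf p :=
    fun c hpc hcp t u hu => (peirceHalf p).smul_mem t (hp.peirceHalf_mul_add_mul hu hpc hcp)
  have hinv : ∀ c d : H →L[ℂ] H, p * c = c → c * p = c → p * d = d → d * p = d →
      c * d = p → d * c = p → ∀ s t : ℂ, t * s = 1 →
      ∀ u ∈ peirceHalf p, (s • anticommL ℂ d) ((t • anticommL ℂ c) u) = u := by
    intro c d hpc hcp hpd hdp hcd hdc s t hst u hu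
    simp only [smul_apply, map_smul, smul_smul, hst, one_smul, anticommL_apply]
    exact hp.anticomm_anticomm_eq_self_of_peirceHalf hu hpd hdp hpc hcp hdc hcd
  obtain ⟨Ψ, hΨ⟩ := ContinuousLinearMap.exists_equiv_restrict
    ((-(1/2) : ℂ) • anticommL ℂ a) ((-2 : ℂ) • anticommL ℂ b)
    (hmaps a hpa hap _) (hmaps b hpb hbp _) (hinv a b hpa hap hpb hbp hab hba _ _ (by norm_num))
    (hinv b a hpb hbp hpa hap hba hab _ _ (by norm_num))
  exact ⟨Ψ, fun u => by simp [hΨ, neg_smul]⟩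

end peirceHalf

theorem Phi_is_linear_homeomorphism_of_peirceHalf_general
    (n : ℕ) (Λ : Fin n → ℂ) (hΛ0 : ∀ k, Λ k ≠ 0)
    (e : Fin n → H →L[ℂ] H) (he : IsOrthProjFamily e)
    (a p : H →L[ℂ] H) (ha : a = ∑ k, Λ k • e k) (hp : p = ∑ k, e k) :
    (∀ u ∈ peirceHalf p, tp p u a - tp u p a
        = -((1/2 : ℂ) • ∑ k, Λ k • (e k * u + u * e k))) ∧
    (∀ u ∈ peirceHalf p, tp p u a - tp u p a ∈ peirceHalf p) ∧
    ∃ Ψ : peirceHalf p ≃L[ℂ] peirceHalf p,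
      ∀ u : peirceHalf p,
        (Ψ u : H →L[ℂ] H) = tp p (u : H →L[ℂ] H) a - tp (u : H →L[ℂ] H) p a := by
  obtain ⟨hstar, hidem, horth⟩ := he
  have hmul :=
    Finset.sum_smul_mul_sum_smul_of_orthogonal (𝕜 := ℂ) (s := Finset.univ) hidem horth
  have hp1 : p = ∑ k, (1 : ℂ) • e k := by simp only [one_smul, hp]
  set b := ∑ k, (Λ k)⁻¹ • e k with hb
  have hpp : IsStarProjection p :=
    ⟨by rw [IsIdempotentElem, hp1, hmul, mul_one], hp ▸ isSelfAdjoint_sum _ fun k _ => hstar k⟩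
  have hpa : p * a = a := by rw [hp1, ha, hmul]; simp only [one_mul]
  have hap : a * p = a := by rw [hp1, ha, hmul]; simp only [mul_one]
  have hpb : p * b = b := by rw [hp1, hb, hmul]; simp only [one_mul]
  have hbp : b * p = b := by rw [hp1, hb, hmul]; simp only [mul_one]
  have hab : a * b = p := by rw [hp1, ha, hb, hmul]; simp only [mul_inv_cancel₀ (hΛ0 _)]
  have hba : b * a = p := by rw [hp1, ha, hb, hmul]; simp only [inv_mul_cancel₀ (hΛ0 _)]
  have hΦ : ∀ u ∈ peirceHalf p, tp p u a - tp u p a = -((1/2 : ℂ) • (u * a + a * u)) :=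
    fun u hu => tp_sub_tp_of_mem_peirceHalf hpp hpa hap hu
  refine ⟨fun u hu => ?_, fun u hu => ?_, ?_⟩
  · rw [hΦ u hu, ha, Finset.mul_sum, Finset.sum_mul, ← Finset.sum_add_distrib]
    congr 2
    refine Finset.sum_congr rfl fun k _ => ?_
    rw [mul_smul_comm, smul_mul_assoc, smul_add, add_comm]
  · rw [hΦ u hu]
    exact neg_mem <| Submodule.smul_mem _ _ <|
      hpp.isIdempotentElem.peirceHalf_mul_add_mul hu hpa hap
  · obtain ⟨Ψ, hΨ⟩ :=
      exists_continuousLinearEquiv_peirceHalf_anticomm hpp.isIdempotentElem hpa hap hpb hbp hab hba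
    exact ⟨Ψ, fun u => (hΨ u).trans (hΦ u u.2).symm⟩

/-- For `a = ∑ Λ k • e k ∈ M(n,Λ,R)` with support `p = ∑ e k`, the map
`Φ_a(x) = {pxa} − {xpa}` preserves `Z_{1/2}(p)`, is given there by
`Φ_a(u) = −(1/2) ∑ Λ k • (eₖu + ueₖ)`, and restricts to a surjective complex-linear
homeomorphism of `Z_{1/2}(p)`. -/
theorem Phi_is_linear_homeomorphism_of_peirceHalf
    (n : ℕ) (hn : 1 ≤ n) (Λ : Fin n → ℂ) (R : Fin n → ℕ)
    (hΛ0 : ∀ k, Λ k ≠ 0) (hΛinj : Function.Injective Λ) (hR : ∀ k, 0 < R k)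
    (e : Fin n → H →L[ℂ] H) (he : IsOrthProjFamily e)
    (herank : ∀ k, FiniteDimensional ℂ (LinearMap.range ((e k) : H →ₗ[ℂ] H)) ∧
      Module.finrank ℂ (LinearMap.range ((e k) : H →ₗ[ℂ] H)) = R k)
    (a p : H →L[ℂ] H) (ha : a = ∑ k, Λ k • e k) (hp : p = ∑ k, e k) :
    (∀ u ∈ peirceHalf p, tp p u a - tp u p a
        = -((1/2 : ℂ) • ∑ k, Λ k • (e k * u + u * e k))) ∧
    (∀ u ∈ peirceHalf p, tp p u a - tp u p a ∈ peirceHalf p) ∧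
    ∃ Ψ : peirceHalf p ≃L[ℂ] peirceHalf p,
      ∀ u : peirceHalf p,
        (Ψ u : H →L[ℂ] H) = tp p (u : H →L[ℂ] H) a - tp (u : H →L[ℂ] H) p a :=
  Phi_is_linear_homeomorphism_of_peirceHalf_general n Λ hΛ0 e he a p ha hp
end

section
/- Let a = Σₖ λₖeₖ ∈ M(n,Λ,R) be hermitian, i.e. all λₖ are real (equivalently a* = a), let p := supp a, and Φ_a(x) := {pxa} − {xpa}. For each k set A(eₖ) := {v ∈ Z : v = eₖveₖ and v* = v}, and let X := (⊕ₖ i·A(eₖ)) ⊕ Z_{1/2}(p), a closed real-linear subspace of Z in which the sum is topologically direct. Then for v = Σₖ vₖ with vₖ ∈ A(eₖ) and u = Σₖ uₖ ∈ Z_{1/2}(p) (uₖ = eₖu + ueₖ), one has Φ_a(iv + u) = −2i Σₖ λₖvₖ − (1/2) Σₖ λₖuₖ; consequently Φ_a restricts to a surjective real-linear homeomorphism of X that maps the subspace ⊕ₖ i·A(eₖ) onto itself. -/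
/-! Setting: `H` is a complex Hilbert space, `Z = 𝔏(H)` the C*-algebra of bounded
linear operators on `H`, regarded as a JB*-triple with product
`{a b c} = (a b* c + c b* a)/2`. -/

variable {H : Type*} [NormedAddCommGroup H] [InnerProductSpace ℂ H] [CompleteSpace H]

set_option maxHeartbeats 2000000
set_option synthInstance.maxHeartbeats 400000

/-- For a hermitian `a = ∑ Λ k • e k ∈ M(n,Λ,R)` with support `p`,
the map `Φ_a(x) = {pxa} − {xpa}` satisfies
`Φ_a(iv + u) = −2i ∑ Λ k • vₖ − (1/2) ∑ Λ k • uₖ` for `vₖ ∈ A(eₖ)`, `u ∈ Z_{1/2}(p)`,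
and restricts to a surjective real-linear homeomorphism of
`X = (⊕ₖ i·A(eₖ)) ⊕ Z_{1/2}(p)` mapping `Y = ⊕ₖ i·A(eₖ)` onto itself. -/
theorem Phi_real_linear_homeomorphism_of_X
    (n : ℕ) (hn : 1 ≤ n) (Λ : Fin n → ℂ) (R : Fin n → ℕ)
    (hΛ0 : ∀ k, Λ k ≠ 0) (hΛinj : Function.Injective Λ) (hR : ∀ k, 0 < R k)
    (hΛreal : ∀ k, (Λ k).im = 0)
    (e : Fin n → H →L[ℂ] H) (he : IsOrthProjFamily e)
    (herank : ∀ k, FiniteDimensional ℂ (LinearMap.range ((e k) : H →ₗ[ℂ] H)) ∧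
      Module.finrank ℂ (LinearMap.range ((e k) : H →ₗ[ℂ] H)) = R k)
    (a p : H →L[ℂ] H) (ha : a = ∑ k, Λ k • e k) (hp : p = ∑ k, e k)
    (Φ : (H →L[ℂ] H) → (H →L[ℂ] H)) (hΦ : ∀ x, Φ x = tp p x a - tp x p a)
    (Y X : Set (H →L[ℂ] H))
    (hY : Y = {x | ∃ v : Fin n → H →L[ℂ] H,
        (∀ k, v k = e k * v k * e k ∧ star (v k) = v k) ∧
        x = Complex.I • ∑ k, v k})
    (hX : X = {x | ∃ y ∈ Y, ∃ u : H →L[ℂ] H, p * u + u * p = u ∧ x = y + u}) :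
    (∀ (v : Fin n → H →L[ℂ] H) (u : H →L[ℂ] H),
      (∀ k, v k = e k * v k * e k ∧ star (v k) = v k) →
      p * u + u * p = u →
      Φ (Complex.I • (∑ k, v k) + u)
        = (-(2 : ℂ) * Complex.I) • ∑ k, Λ k • v k
          - (1/2 : ℂ) • ∑ k, Λ k • (e k * u + u * e k)) ∧
    (∀ x y : H →L[ℂ] H, Φ (x + y) = Φ x + Φ y) ∧
    (∀ (r : ℝ) (x : H →L[ℂ] H), Φ (r • x) = r • Φ x) ∧
    Φ '' X = X ∧ Set.InjOn Φ X ∧ Φ '' Y = Y ∧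
    ∃ C > 0, ∀ x ∈ X, ‖x‖ ≤ C * ‖Φ x‖ := by
  classical
  obtain ⟨he1, he2, he3⟩ := he
  -- ## basic multiplication facts
  have hpe : ∀ k, p * e k = e k := by
    intro k
    rw [hp, Finset.sum_mul, Finset.sum_eq_single k (fun j _ hj => he3 j k hj) (by simp)]
    exact he2 k
  have hep : ∀ k, e k * p = e k := by
    intro k
    rw [hp, Finset.mul_sum, Finset.sum_eq_single k (fun j _ hj => he3 k j (Ne.symm hj)) (by simp)]
    exact he2 k
  have hpp : p * p = p := by
    nth_rewrite 1 [hp]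
    rw [Finset.sum_mul]
    simp only [hep]
    exact hp.symm
  have hpa : p * a = a := by
    rw [ha, Finset.mul_sum]
    simp only [mul_smul_comm, hpe]
  have hap : a * p = a := by
    rw [ha, Finset.sum_mul]
    simp only [smul_mul_assoc, hep]
  have hae : ∀ k, a * e k = Λ k • e k := by
    intro k
    rw [ha, Finset.sum_mul, Finset.sum_eq_single k
      (fun j _ hj => by rw [smul_mul_assoc, he3 j k hj, smul_zero]) (by simp)]
    rw [smul_mul_assoc, he2]
  have hea : ∀ k, e k * a = Λ k • e k := by
    intro k
    rw [ha, Finset.mul_sum, Finset.sum_eq_single k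
      (fun j _ hj => by rw [mul_smul_comm, he3 k j (Ne.symm hj), smul_zero]) (by simp)]
    rw [mul_smul_comm, he2]
  have haq : a * (1 - p) = 0 := by rw [mul_sub, mul_one, hap, sub_self]
  have hqa : (1 - p) * a = 0 := by rw [sub_mul, one_mul, hpa, sub_self]
  have hΛc : ∀ k, (starRingEnd ℂ) (Λ k) = Λ k := fun k => Complex.conj_eq_iff_im.2 (hΛreal k)
  have hstarp : star p = p := by
    rw [hp, star_sum]
    exact Finset.sum_congr rfl fun k _ => he1 k
  -- ## facts about elements of `Z_{1/2}(p)`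
  have hhalf : ∀ u : H →L[ℂ] H, p * u + u * p = u → p * u * p = 0 := by
    intro u hu
    have h1 : p * (p * u + u * p) = p * u := by rw [hu]
    rw [mul_add, ← mul_assoc, hpp, ← mul_assoc] at h1
    exact add_eq_left.mp h1
  have hdecomp : ∀ u : H →L[ℂ] H, p * u + u * p = u →
      p * u * (1 - p) + (1 - p) * u * p = u := by
    intro u hu
    have e1 : p * u * (1 - p) = p * u - p * u * p := by rw [mul_sub, mul_one]
    have e2 : (1 - p) * u * p = u * p - p * u * p := by rw [sub_mul, one_mul, sub_mul]
    rw [e1, e2, hhalf u hu, sub_zero, sub_zero]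
    exact hu
  have hpwa : ∀ u : H →L[ℂ] H, p * u + u * p = u → p * u * a = 0 := by
    intro u hu
    calc p * u * a = p * u * (p * a) := by rw [hpa]
    _ = p * u * p * a := by rw [← mul_assoc]
    _ = 0 := by rw [hhalf u hu, zero_mul]
  have hawp : ∀ u : H →L[ℂ] H, p * u + u * p = u → a * u * p = 0 := by
    intro u hu
    calc a * u * p = a * p * u * p := by rw [hap]
    _ = a * (p * u * p) := by rw [mul_assoc a p u, mul_assoc a (p * u) p]
    _ = 0 := by rw [hhalf u hu, mul_zero]
  have heue : ∀ (k) (u : H →L[ℂ] H), p * u + u * p = u → e k * u * e k = 0 := by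
    intro k u hu
    have h1 : e k * (p * u + u * p) * e k = e k * u * e k := by rw [hu]
    rw [mul_add, add_mul] at h1
    have h2 : e k * (p * u) * e k = e k * u * e k := by rw [← mul_assoc, hep]
    have h3 : e k * (u * p) * e k = e k * u * e k := by
      rw [← mul_assoc, mul_assoc (e k * u) p (e k), hpe]
    rw [h2, h3] at h1
    exact add_eq_right.mp h1
  have hstarU : ∀ u : H →L[ℂ] H, p * u + u * p = u → p * star u + star u * p = star u := by
    intro u hu
    have h := congrArg star hu
    rw [star_add, star_mul, star_mul, hstarp] at h
    rw [add_comm]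
    exact h
  -- ## facts about elements of `A(e k)`
  have hpv : ∀ (k) (w : H →L[ℂ] H), w = e k * w * e k → p * w = w := by
    intro k w hw
    conv_lhs => rw [hw]
    rw [← mul_assoc, ← mul_assoc, hpe, ← hw]
  have hvp : ∀ (k) (w : H →L[ℂ] H), w = e k * w * e k → w * p = w := by
    intro k w hw
    conv_lhs => rw [hw]
    rw [mul_assoc, hep, ← hw]
  have hav : ∀ (k) (w : H →L[ℂ] H), w = e k * w * e k → a * w = Λ k • w := by
    intro k w hw
    conv_lhs => rw [hw]
    rw [← mul_assoc, ← mul_assoc, hae, smul_mul_assoc, smul_mul_assoc, ← hw]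
  have hva : ∀ (k) (w : H →L[ℂ] H), w = e k * w * e k → w * a = Λ k • w := by
    intro k w hw
    conv_lhs => rw [hw]
    rw [mul_assoc, hea, mul_smul_comm, ← hw]
  have hvq : ∀ (k) (w : H →L[ℂ] H), w = e k * w * e k → w * (1 - p) = 0 := by
    intro k w hw
    rw [mul_sub, mul_one, hvp k w hw, sub_self]
  have hqv : ∀ (k) (w : H →L[ℂ] H), w = e k * w * e k → (1 - p) * w = 0 := by
    intro k w hw
    rw [sub_mul, one_mul, hpv k w hw, sub_self]
  have hev0 : ∀ (j k) (w : H →L[ℂ] H), w = e j * w * e j → j ≠ k → e k * w = 0 := by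
    intro j k w hw hjk
    rw [hw, ← mul_assoc, ← mul_assoc, he3 k j (Ne.symm hjk), zero_mul, zero_mul]
  have hAsmul : ∀ (c : ℂ) (k) (w : H →L[ℂ] H), (starRingEnd ℂ) c = c →
      (w = e k * w * e k ∧ star w = w) →
      (c • w = e k * (c • w) * e k ∧ star (c • w) = c • w) := by
    intro c k w hc hw
    constructor
    · rw [mul_smul_comm, smul_mul_assoc, ← hw.1]
    · rw [star_smul, Complex.star_def, hc, hw.2]
  -- ## scalar identities
  have hc1 : ∀ k, (starRingEnd ℂ) ((-2 : ℂ) * Λ k) = (-2 : ℂ) * Λ k := by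
    intro k; simp [hΛc, map_ofNat]
  have hc2 : ∀ k, (starRingEnd ℂ) (-(1 : ℂ) / (2 * Λ k)) = -(1 : ℂ) / (2 * Λ k) := by
    intro k; simp [map_div₀, hΛc, map_ofNat]
  have hs1 : ∀ k, (-(1 : ℂ) / (2 * Λ k)) * ((-2 : ℂ) * Λ k) = 1 := by
    intro k; have := hΛ0 k; field_simp
  have hs2 : ∀ k, ((-2 : ℂ) * Λ k) * (-(1 : ℂ) / (2 * Λ k)) = 1 := by
    intro k; have := hΛ0 k; field_simp
  have hs3 : ∀ k, ((-2 : ℂ) * (Λ k)⁻¹) * ((-(1/2) : ℂ) * Λ k) = 1 := by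
    intro k; have := hΛ0 k; field_simp
  have hs4 : ∀ k, ((-2 : ℂ) * (Λ k)⁻¹) * Λ k = -2 := by
    intro k; have := hΛ0 k; field_simp
  -- ## the formula `Φ x = (1/2)(p x* a + a x* p) - (1/2)(x a + a x)`
  have hΦform : ∀ x, Φ x = (1/2 : ℂ) • (p * star x * a + a * star x * p)
      - (1/2 : ℂ) • (x * a + a * x) := by
    intro x
    rw [hΦ x]
    unfold tp
    rw [hstarp, mul_assoc x p a, hpa, hap]
  -- ## the main formula
  have hform : ∀ (v : Fin n → H →L[ℂ] H) (u : H →L[ℂ] H),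
      (∀ k, v k = e k * v k * e k ∧ star (v k) = v k) → p * u + u * p = u →
      Φ (Complex.I • (∑ k, v k) + u)
        = Complex.I • (∑ k, ((-2 : ℂ) * Λ k) • v k) + (-(1/2) : ℂ) • (a * u + u * a) := by
    intro v u hv hu
    have hu' := hstarU u hu
    have hsv : ∑ k, star (v k) = ∑ k, v k := Finset.sum_congr rfl fun k _ => (hv k).2
    have hsx : star (Complex.I • (∑ k, v k) + u)
        = (-Complex.I) • (∑ k, v k) + star u := by
      rw [star_add, star_smul, star_sum, hsv, Complex.star_def, Complex.conj_I]
    have hSa : (∑ k, v k) * a = ∑ k, Λ k • v k := by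
      rw [Finset.sum_mul]
      exact Finset.sum_congr rfl fun k _ => hva k (v k) (hv k).1
    have haS : a * (∑ k, v k) = ∑ k, Λ k • v k := by
      rw [Finset.mul_sum]
      exact Finset.sum_congr rfl fun k _ => hav k (v k) (hv k).1
    have hpSa : p * (∑ k, v k) * a = ∑ k, Λ k • v k := by
      rw [Finset.mul_sum, Finset.sum_mul]
      exact Finset.sum_congr rfl fun k _ => by
        rw [hpv k (v k) (hv k).1, hva k (v k) (hv k).1]
    have haSp : a * (∑ k, v k) * p = ∑ k, Λ k • v k := by
      rw [Finset.mul_sum, Finset.sum_mul]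
      exact Finset.sum_congr rfl fun k _ => by
        rw [hav k (v k) (hv k).1, smul_mul_assoc, hvp k (v k) (hv k).1]
    have h2 : ∑ k, ((-2 : ℂ) * Λ k) • v k = (-2 : ℂ) • ∑ k, Λ k • v k := by
      rw [Finset.smul_sum]
      exact Finset.sum_congr rfl fun k _ => mul_smul _ _ _
    rw [hΦform, hsx, h2]
    simp only [mul_add, add_mul]
    simp only [mul_smul_comm, smul_mul_assoc]
    rw [hpSa, haSp, hSa, haS, hpwa (star u) hu', hawp (star u) hu']
    simp only [add_zero, zero_add]
    module
  -- ## the inverse map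
  let Ψ : (H →L[ℂ] H) → (H →L[ℂ] H) := fun z =>
    ∑ k, ((-(1 : ℂ) / (2 * Λ k)) • (e k * z * e k)
      + ((-2 : ℂ) * (Λ k)⁻¹) • (e k * z * (1 - p) + (1 - p) * z * e k))
  have hΨdef : ∀ z, Ψ z = ∑ k, ((-(1 : ℂ) / (2 * Λ k)) • (e k * z * e k)
      + ((-2 : ℂ) * (Λ k)⁻¹) • (e k * z * (1 - p) + (1 - p) * z * e k)) := fun _ => rfl
  have hΨform : ∀ (v : Fin n → H →L[ℂ] H) (u : H →L[ℂ] H),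
      (∀ k, v k = e k * v k * e k ∧ star (v k) = v k) → p * u + u * p = u →
      Ψ (Complex.I • (∑ k, v k) + u)
        = Complex.I • (∑ k, (-(1 : ℂ) / (2 * Λ k)) • v k)
          + ∑ k, ((-2 : ℂ) * (Λ k)⁻¹) • (e k * u * (1 - p) + (1 - p) * u * e k) := by
    intro v u hv hu
    have heSe : ∀ k, e k * (∑ j, v j) * e k = v k := by
      intro k
      rw [Finset.mul_sum, Finset.sum_mul, Finset.sum_eq_single k
        (fun j _ hj => by rw [hev0 j k (v j) (hv j).1 hj, zero_mul]) (by simp)]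
      exact ((hv k).1).symm
    have hSq : (∑ j, v j) * (1 - p) = 0 := by
      rw [Finset.sum_mul]
      exact Finset.sum_eq_zero fun k _ => hvq k (v k) (hv k).1
    have hqS : (1 - p) * (∑ j, v j) = 0 := by
      rw [Finset.mul_sum]
      exact Finset.sum_eq_zero fun k _ => hqv k (v k) (hv k).1
    rw [hΨdef, Finset.sum_add_distrib]
    congr 1
    · calc ∑ k, (-(1 : ℂ) / (2 * Λ k)) • (e k * (Complex.I • (∑ j, v j) + u) * e k)
          = ∑ k, Complex.I • ((-(1 : ℂ) / (2 * Λ k)) • v k) := by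
            refine Finset.sum_congr rfl fun k _ => ?_
            rw [mul_add, add_mul, heue k u hu, add_zero, mul_smul_comm, smul_mul_assoc,
              heSe k, smul_smul, smul_smul, mul_comm]
      _ = Complex.I • ∑ k, (-(1 : ℂ) / (2 * Λ k)) • v k := (Finset.smul_sum).symm
    · refine Finset.sum_congr rfl fun k _ => ?_
      congr 1
      have t1 : e k * (Complex.I • (∑ j, v j) + u) * (1 - p) = e k * u * (1 - p) := by
        rw [mul_add, add_mul, mul_smul_comm, smul_mul_assoc, mul_assoc, hSq, mul_zero,
          smul_zero, zero_add]
      have t2 : (1 - p) * (Complex.I • (∑ j, v j) + u) * e k = (1 - p) * u * e k := by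
        rw [mul_add, add_mul, mul_smul_comm, smul_mul_assoc, hqS, zero_mul, smul_zero,
          zero_add]
      rw [t1, t2]
  -- ## closure of `Z_{1/2}(p)` under the relevant operations
  have hUsmul : ∀ (c : ℂ) (u : H →L[ℂ] H), p * u + u * p = u →
      p * (c • u) + (c • u) * p = c • u := by
    intro c u hu
    rw [mul_smul_comm, smul_mul_assoc, ← smul_add, hu]
  have hUadd : ∀ u w : H →L[ℂ] H, p * u + u * p = u → p * w + w * p = w →
      p * (u + w) + (u + w) * p = u + w := by
    intro u w hu hw
    rw [mul_add, add_mul, add_add_add_comm, hu, hw]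
  have hUsum : ∀ f : Fin n → H →L[ℂ] H, (∀ k, p * f k + f k * p = f k) →
      p * (∑ k, f k) + (∑ k, f k) * p = ∑ k, f k := by
    intro f hf
    rw [Finset.mul_sum, Finset.sum_mul, ← Finset.sum_add_distrib]
    exact Finset.sum_congr rfl fun k _ => hf k
  have hUt : ∀ (k) (u : H →L[ℂ] H),
      p * (e k * u * (1 - p)) + (e k * u * (1 - p)) * p = e k * u * (1 - p) := by
    intro k u
    have h1 : p * (e k * u * (1 - p)) = e k * u * (1 - p) := by
      rw [← mul_assoc, ← mul_assoc, hpe]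
    have h2 : (e k * u * (1 - p)) * p = 0 := by
      rw [mul_assoc, sub_mul, one_mul, hpp, sub_self, mul_zero]
    rw [h1, h2, add_zero]
  have hUs : ∀ (k) (u : H →L[ℂ] H),
      p * ((1 - p) * u * e k) + ((1 - p) * u * e k) * p = (1 - p) * u * e k := by
    intro k u
    have h1 : p * ((1 - p) * u * e k) = 0 := by
      rw [← mul_assoc, ← mul_assoc, mul_sub, mul_one, hpp, sub_self, zero_mul, zero_mul]
    have h2 : ((1 - p) * u * e k) * p = (1 - p) * u * e k := by
      rw [mul_assoc, hep]
    rw [h1, h2, zero_add]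
  have hUau : ∀ u : H →L[ℂ] H, p * u + u * p = u →
      p * (a * u + u * a) + (a * u + u * a) * p = a * u + u * a := by
    intro u hu
    have e1 : p * (a * u) = a * u := by rw [← mul_assoc, hpa]
    have e2 : p * (u * a) = 0 := by rw [← mul_assoc]; exact hpwa u hu
    have e3 : a * u * p = 0 := hawp u hu
    have e4 : u * a * p = u * a := by rw [mul_assoc, hap]
    rw [mul_add, add_mul, e1, e2, e3, e4, add_zero, zero_add]
  have hu'U : ∀ u : H →L[ℂ] H, p * u + u * p = u →
      p * ((-(1/2) : ℂ) • (a * u + u * a)) + ((-(1/2) : ℂ) • (a * u + u * a)) * p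
        = (-(1/2) : ℂ) • (a * u + u * a) := fun u hu => hUsmul _ _ (hUau u hu)
  have hu''U : ∀ u : H →L[ℂ] H,
      p * (∑ k, ((-2 : ℂ) * (Λ k)⁻¹) • (e k * u * (1 - p) + (1 - p) * u * e k))
        + (∑ k, ((-2 : ℂ) * (Λ k)⁻¹) • (e k * u * (1 - p) + (1 - p) * u * e k)) * p
        = ∑ k, ((-2 : ℂ) * (Λ k)⁻¹) • (e k * u * (1 - p) + (1 - p) * u * e k) := by
    intro u
    exact hUsum _ fun k => hUsmul _ _ (hUadd _ _ (hUt k u) (hUs k u))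
  -- ## sums of corner pieces
  have hsumT : ∀ u : H →L[ℂ] H, ∑ k, e k * u * (1 - p) = p * u * (1 - p) := by
    intro u
    rw [← Finset.sum_mul, ← Finset.sum_mul, ← hp]
  have hsumS : ∀ u : H →L[ℂ] H, ∑ k, (1 - p) * u * e k = (1 - p) * u * p := by
    intro u
    rw [← Finset.mul_sum, ← hp]
  -- ## `Ψ ∘ Φ = id` on representatives
  have hΨΦrep : ∀ (v : Fin n → H →L[ℂ] H) (u : H →L[ℂ] H),
      (∀ k, v k = e k * v k * e k ∧ star (v k) = v k) → p * u + u * p = u →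
      Ψ (Φ (Complex.I • (∑ k, v k) + u)) = Complex.I • (∑ k, v k) + u := by
    intro v u hv hu
    have hv' : ∀ k, ((-2 : ℂ) * Λ k) • v k = e k * (((-2 : ℂ) * Λ k) • v k) * e k
        ∧ star (((-2 : ℂ) * Λ k) • v k) = ((-2 : ℂ) * Λ k) • v k :=
      fun k => hAsmul _ k _ (hc1 k) (hv k)
    rw [hform v u hv hu,
      hΨform (fun k => ((-2 : ℂ) * Λ k) • v k) ((-(1/2) : ℂ) • (a * u + u * a)) hv'
        (hu'U u hu)]
    have hterm : ∀ k, e k * ((-(1/2) : ℂ) • (a * u + u * a)) * (1 - p)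
        = ((-(1/2) : ℂ) * Λ k) • (e k * u * (1 - p)) := by
      intro k
      rw [mul_smul_comm, smul_mul_assoc, mul_add, add_mul,
        ← mul_assoc (e k) a u, hea, smul_mul_assoc, smul_mul_assoc,
        mul_assoc (e k) (u * a) (1 - p), mul_assoc u a (1 - p), haq, mul_zero, mul_zero,
        add_zero, smul_smul]
    have hterm2 : ∀ k, (1 - p) * ((-(1/2) : ℂ) • (a * u + u * a)) * e k
        = ((-(1/2) : ℂ) * Λ k) • ((1 - p) * u * e k) := by
      intro k
      rw [mul_smul_comm, smul_mul_assoc, mul_add, add_mul,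
        ← mul_assoc (1 - p) a u, hqa, zero_mul, zero_mul, zero_add,
        ← mul_assoc (1 - p) u a, mul_assoc ((1 - p) * u) a (e k), hae, mul_smul_comm,
        smul_smul]
    congr 1
    · congr 1
      refine Finset.sum_congr rfl fun k _ => ?_
      rw [smul_smul, hs1 k, one_smul]
    · calc ∑ k, ((-2 : ℂ) * (Λ k)⁻¹) •
            (e k * ((-(1/2) : ℂ) • (a * u + u * a)) * (1 - p)
              + (1 - p) * ((-(1/2) : ℂ) • (a * u + u * a)) * e k)
          = ∑ k, (e k * u * (1 - p) + (1 - p) * u * e k) := by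
            refine Finset.sum_congr rfl fun k _ => ?_
            rw [hterm k, hterm2 k, ← smul_add, smul_smul, hs3 k, one_smul]
      _ = p * u * (1 - p) + (1 - p) * u * p := by
            rw [Finset.sum_add_distrib, hsumT u, hsumS u]
      _ = u := hdecomp u hu
  -- ## `Φ ∘ Ψ = id` on representatives
  have hΦΨrep : ∀ (v : Fin n → H →L[ℂ] H) (u : H →L[ℂ] H),
      (∀ k, v k = e k * v k * e k ∧ star (v k) = v k) → p * u + u * p = u →
      Φ (Ψ (Complex.I • (∑ k, v k) + u)) = Complex.I • (∑ k, v k) + u := by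
    intro v u hv hu
    have hv'' : ∀ k, (-(1 : ℂ) / (2 * Λ k)) • v k
        = e k * ((-(1 : ℂ) / (2 * Λ k)) • v k) * e k
        ∧ star ((-(1 : ℂ) / (2 * Λ k)) • v k) = (-(1 : ℂ) / (2 * Λ k)) • v k :=
      fun k => hAsmul _ k _ (hc2 k) (hv k)
    rw [hΨform v u hv hu,
      hform (fun k => (-(1 : ℂ) / (2 * Λ k)) • v k)
        (∑ k, ((-2 : ℂ) * (Λ k)⁻¹) • (e k * u * (1 - p) + (1 - p) * u * e k)) hv''
        (hu''U u)]
    have hA : a * (∑ k, ((-2 : ℂ) * (Λ k)⁻¹) • (e k * u * (1 - p) + (1 - p) * u * e k))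
        = (-2 : ℂ) • (p * u * (1 - p)) := by
      rw [Finset.mul_sum]
      calc ∑ k, a * (((-2 : ℂ) * (Λ k)⁻¹) • (e k * u * (1 - p) + (1 - p) * u * e k))
          = ∑ k, (-2 : ℂ) • (e k * u * (1 - p)) := by
            refine Finset.sum_congr rfl fun k _ => ?_
            rw [mul_smul_comm, mul_add,
              ← mul_assoc a (e k * u) (1 - p), ← mul_assoc a (e k) u, hae,
              smul_mul_assoc, smul_mul_assoc,
              ← mul_assoc a ((1 - p) * u) (e k), ← mul_assoc a (1 - p) u, haq,
              zero_mul, zero_mul, add_zero, smul_smul, hs4 k]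
      _ = (-2 : ℂ) • (p * u * (1 - p)) := by rw [← Finset.smul_sum, hsumT u]
    have hB : (∑ k, ((-2 : ℂ) * (Λ k)⁻¹) • (e k * u * (1 - p) + (1 - p) * u * e k)) * a
        = (-2 : ℂ) • ((1 - p) * u * p) := by
      rw [Finset.sum_mul]
      calc ∑ k, (((-2 : ℂ) * (Λ k)⁻¹) • (e k * u * (1 - p) + (1 - p) * u * e k)) * a
          = ∑ k, (-2 : ℂ) • ((1 - p) * u * e k) := by
            refine Finset.sum_congr rfl fun k _ => ?_
            rw [smul_mul_assoc, add_mul,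
              mul_assoc (e k * u) (1 - p) a, hqa, mul_zero, zero_add,
              mul_assoc ((1 - p) * u) (e k) a, hea, mul_smul_comm, smul_smul, hs4 k]
      _ = (-2 : ℂ) • ((1 - p) * u * p) := by rw [← Finset.smul_sum, hsumS u]
    congr 1
    · congr 1
      refine Finset.sum_congr rfl fun k _ => ?_
      rw [smul_smul, hs2 k, one_smul]
    · rw [hA, hB, ← smul_add, smul_smul]
      norm_num
      exact hdecomp u hu
  -- ## representatives and memberships
  have hrep : ∀ x ∈ X, ∃ (v : Fin n → H →L[ℂ] H) (u : H →L[ℂ] H),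
      (∀ k, v k = e k * v k * e k ∧ star (v k) = v k) ∧ p * u + u * p = u ∧
      x = Complex.I • (∑ k, v k) + u := by
    intro x hx
    rw [hX] at hx
    obtain ⟨y, hy, u, hu, rfl⟩ := hx
    rw [hY] at hy
    obtain ⟨v, hv, rfl⟩ := hy
    exact ⟨v, u, hv, hu, rfl⟩
  have hmemX : ∀ (v : Fin n → H →L[ℂ] H) (u : H →L[ℂ] H),
      (∀ k, v k = e k * v k * e k ∧ star (v k) = v k) → p * u + u * p = u →
      Complex.I • (∑ k, v k) + u ∈ X := by
    intro v u hv hu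
    rw [hX]
    refine ⟨Complex.I • (∑ k, v k), ?_, u, hu, rfl⟩
    rw [hY]
    exact ⟨v, hv, rfl⟩
  have hΨΦX : ∀ x ∈ X, Ψ (Φ x) = x := by
    intro x hx
    obtain ⟨v, u, hv, hu, rfl⟩ := hrep x hx
    exact hΨΦrep v u hv hu
  have hΦΨX : ∀ x ∈ X, Φ (Ψ x) = x := by
    intro x hx
    obtain ⟨v, u, hv, hu, rfl⟩ := hrep x hx
    exact hΦΨrep v u hv hu
  have hΦX : ∀ x ∈ X, Φ x ∈ X := by
    intro x hx
    obtain ⟨v, u, hv, hu, rfl⟩ := hrep x hx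
    rw [hform v u hv hu]
    exact hmemX _ _ (fun k => hAsmul _ k _ (hc1 k) (hv k)) (hu'U u hu)
  have hΨX : ∀ x ∈ X, Ψ x ∈ X := by
    intro x hx
    obtain ⟨v, u, hv, hu, rfl⟩ := hrep x hx
    rw [hΨform v u hv hu]
    exact hmemX _ _ (fun k => hAsmul _ k _ (hc2 k) (hv k)) (hu''U u)
  have hrepY : ∀ x ∈ Y, ∃ v : Fin n → H →L[ℂ] H,
      (∀ k, v k = e k * v k * e k ∧ star (v k) = v k) ∧
      x = Complex.I • (∑ k, v k) := by
    intro x hx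
    rw [hY] at hx
    exact hx
  have hYX : Y ⊆ X := by
    intro z hz
    rw [hX]
    exact ⟨z, hz, 0, by simp, by simp⟩
  have hU0 : p * (0 : H →L[ℂ] H) + 0 * p = 0 := by simp
  have hΦY : ∀ x ∈ Y, Φ x ∈ Y := by
    intro x hx
    obtain ⟨v, hv, rfl⟩ := hrepY x hx
    have h := hform v 0 hv hU0
    simp only [mul_zero, zero_mul, add_zero, smul_zero] at h
    rw [h, hY]
    exact ⟨fun k => ((-2 : ℂ) * Λ k) • v k,
      fun k => hAsmul _ k _ (hc1 k) (hv k), rfl⟩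
  have hΨY : ∀ x ∈ Y, Ψ x ∈ Y := by
    intro x hx
    obtain ⟨v, hv, rfl⟩ := hrepY x hx
    have h := hΨform v 0 hv hU0
    simp only [mul_zero, zero_mul, add_zero, zero_add, smul_zero,
      Finset.sum_const_zero] at h
    rw [h, hY]
    exact ⟨fun k => (-(1 : ℂ) / (2 * Λ k)) • v k,
      fun k => hAsmul _ k _ (hc2 k) (hv k), rfl⟩
  -- ## conclusion
  refine ⟨?_, ?_, ?_, ?_, ?_, ?_, ?_⟩
  · intro v u hv hu
    have h1 : ∑ k, Λ k • (e k * u + u * e k) = a * u + u * a := by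
      rw [ha, Finset.sum_mul, Finset.mul_sum, ← Finset.sum_add_distrib]
      refine Finset.sum_congr rfl fun k _ => ?_
      rw [smul_add, smul_mul_assoc, mul_smul_comm]
    have h2 : ∑ k, ((-2 : ℂ) * Λ k) • v k = (-2 : ℂ) • ∑ k, Λ k • v k := by
      rw [Finset.smul_sum]
      exact Finset.sum_congr rfl fun k _ => mul_smul _ _ _
    rw [hform v u hv hu, h1, h2]
    module
  · intro x y
    rw [hΦform (x + y), hΦform x, hΦform y, star_add]
    simp only [mul_add, add_mul]
    module
  · intro r x
    rw [hΦform (r • x), hΦform x, star_smul, star_trivial]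
    simp only [mul_smul_comm, smul_mul_assoc]
    rw [← smul_add, ← smul_add, smul_comm (1/2 : ℂ) r, smul_comm (1/2 : ℂ) r, ← smul_sub]
  · apply Set.Subset.antisymm
    · rintro _ ⟨x, hx, rfl⟩
      exact hΦX x hx
    · intro z hz
      exact ⟨Ψ z, hΨX z hz, hΦΨX z hz⟩
  · intro x hx y hy hxy
    calc x = Ψ (Φ x) := (hΨΦX x hx).symm
    _ = Ψ (Φ y) := by rw [hxy]
    _ = y := hΨΦX y hy
  · apply Set.Subset.antisymm
    · rintro _ ⟨x, hx, rfl⟩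
      exact hΦY x hx
    · intro z hz
      exact ⟨Ψ z, hΨY z hz, hΦΨX z (hYX hz)⟩
  · have hbound : ∃ C0 : ℝ, 0 ≤ C0 ∧ ∀ z : H →L[ℂ] H, ‖Ψ z‖ ≤ C0 * ‖z‖ := by
      refine ⟨∑ k, (‖(-(1 : ℂ) / (2 * Λ k))‖ * (‖e k‖ * ‖e k‖)
        + ‖((-2 : ℂ) * (Λ k)⁻¹)‖ * (‖e k‖ * ‖(1 : H →L[ℂ] H) - p‖
          + ‖(1 : H →L[ℂ] H) - p‖ * ‖e k‖)),
        Finset.sum_nonneg fun k _ => by positivity, ?_⟩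
      intro z
      have hk : ∀ k : Fin n, ‖(-(1 : ℂ) / (2 * Λ k)) • (e k * z * e k)
          + ((-2 : ℂ) * (Λ k)⁻¹) • (e k * z * (1 - p) + (1 - p) * z * e k)‖
          ≤ (‖(-(1 : ℂ) / (2 * Λ k))‖ * (‖e k‖ * ‖e k‖)
            + ‖((-2 : ℂ) * (Λ k)⁻¹)‖ * (‖e k‖ * ‖(1 : H →L[ℂ] H) - p‖
              + ‖(1 : H →L[ℂ] H) - p‖ * ‖e k‖)) * ‖z‖ := by
        intro k
        have b1 : ‖e k * z * e k‖ ≤ ‖e k‖ * ‖e k‖ * ‖z‖ := by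
          calc ‖e k * z * e k‖ ≤ ‖e k * z‖ * ‖e k‖ := norm_mul_le _ _
          _ ≤ ‖e k‖ * ‖z‖ * ‖e k‖ := by gcongr; exact norm_mul_le _ _
          _ = ‖e k‖ * ‖e k‖ * ‖z‖ := by ring
        have b2 : ‖e k * z * (1 - p)‖ ≤ ‖e k‖ * ‖(1 : H →L[ℂ] H) - p‖ * ‖z‖ := by
          calc ‖e k * z * (1 - p)‖ ≤ ‖e k * z‖ * ‖(1 : H →L[ℂ] H) - p‖ := norm_mul_le _ _
          _ ≤ ‖e k‖ * ‖z‖ * ‖(1 : H →L[ℂ] H) - p‖ := by gcongr; exact norm_mul_le _ _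
          _ = ‖e k‖ * ‖(1 : H →L[ℂ] H) - p‖ * ‖z‖ := by ring
        have b3 : ‖(1 - p) * z * e k‖ ≤ ‖(1 : H →L[ℂ] H) - p‖ * ‖e k‖ * ‖z‖ := by
          calc ‖(1 - p) * z * e k‖ ≤ ‖(1 - p) * z‖ * ‖e k‖ := norm_mul_le _ _
          _ ≤ ‖(1 : H →L[ℂ] H) - p‖ * ‖z‖ * ‖e k‖ := by gcongr; exact norm_mul_le _ _
          _ = ‖(1 : H →L[ℂ] H) - p‖ * ‖e k‖ * ‖z‖ := by ring
        have b23 : ‖e k * z * (1 - p) + (1 - p) * z * e k‖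
            ≤ ‖e k‖ * ‖(1 : H →L[ℂ] H) - p‖ * ‖z‖
              + ‖(1 : H →L[ℂ] H) - p‖ * ‖e k‖ * ‖z‖ :=
          (norm_add_le _ _).trans (add_le_add b2 b3)
        calc ‖(-(1 : ℂ) / (2 * Λ k)) • (e k * z * e k)
            + ((-2 : ℂ) * (Λ k)⁻¹) • (e k * z * (1 - p) + (1 - p) * z * e k)‖
            ≤ ‖(-(1 : ℂ) / (2 * Λ k)) • (e k * z * e k)‖
              + ‖((-2 : ℂ) * (Λ k)⁻¹) • (e k * z * (1 - p) + (1 - p) * z * e k)‖ :=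
            norm_add_le _ _
        _ = ‖(-(1 : ℂ) / (2 * Λ k))‖ * ‖e k * z * e k‖
            + ‖((-2 : ℂ) * (Λ k)⁻¹)‖ * ‖e k * z * (1 - p) + (1 - p) * z * e k‖ := by
              rw [norm_smul, norm_smul]
        _ ≤ ‖(-(1 : ℂ) / (2 * Λ k))‖ * (‖e k‖ * ‖e k‖ * ‖z‖)
            + ‖((-2 : ℂ) * (Λ k)⁻¹)‖ * (‖e k‖ * ‖(1 : H →L[ℂ] H) - p‖ * ‖z‖
              + ‖(1 : H →L[ℂ] H) - p‖ * ‖e k‖ * ‖z‖) := by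
              exact add_le_add (mul_le_mul_of_nonneg_left b1 (norm_nonneg _))
                (mul_le_mul_of_nonneg_left b23 (norm_nonneg _))
        _ = (‖(-(1 : ℂ) / (2 * Λ k))‖ * (‖e k‖ * ‖e k‖)
            + ‖((-2 : ℂ) * (Λ k)⁻¹)‖ * (‖e k‖ * ‖(1 : H →L[ℂ] H) - p‖
              + ‖(1 : H →L[ℂ] H) - p‖ * ‖e k‖)) * ‖z‖ := by ring
      calc ‖Ψ z‖ ≤ ∑ k, ‖(-(1 : ℂ) / (2 * Λ k)) • (e k * z * e k)
            + ((-2 : ℂ) * (Λ k)⁻¹) • (e k * z * (1 - p) + (1 - p) * z * e k)‖ := by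
            rw [hΨdef]
            exact norm_sum_le _ _
      _ ≤ ∑ k, (‖(-(1 : ℂ) / (2 * Λ k))‖ * (‖e k‖ * ‖e k‖)
            + ‖((-2 : ℂ) * (Λ k)⁻¹)‖ * (‖e k‖ * ‖(1 : H →L[ℂ] H) - p‖
              + ‖(1 : H →L[ℂ] H) - p‖ * ‖e k‖)) * ‖z‖ :=
          Finset.sum_le_sum fun k _ => hk k
      _ = _ := by rw [← Finset.sum_mul]
    obtain ⟨C0, hC0, hb⟩ := hbound
    refine ⟨C0 + 1, by linarith, ?_⟩
    intro x hx
    calc ‖x‖ = ‖Ψ (Φ x)‖ := by rw [hΨΦX x hx]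
    _ ≤ C0 * ‖Φ x‖ := hb (Φ x)
    _ ≤ (C0 + 1) * ‖Φ x‖ := by
        have h0 := norm_nonneg (Φ x)
        nlinarith
end

section
/- Let a ∈ M(n,Λ,R), p := supp a, and let u ∈ Z_{1/2}(p) be selfadjoint. Set c := (pu − up)/2. Then c* = −c, the exponential h := exp(g(p,u)) (exponential taken in the Banach algebra of bounded real-linear operators on Z) is given by h(z) = e^c z e^{−c} for all z ∈ Z, where e^c is a unitary operator on H, and h maps M(n,Λ,R) bijectively onto itself. -/
/-! Setting: `H` is a complex Hilbert space, `Z = 𝔏(H)` the C*-algebra of bounded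
linear operators on `H`, regarded as a JB*-triple with product
`{a b c} = (a b* c + c b* a)/2`. -/

variable {H : Type*} [NormedAddCommGroup H] [InnerProductSpace ℂ H] [CompleteSpace H]

/-- The operator `g(p,u) = p□u − u□p : z ↦ {puz} − {upz}` as a bounded real-linear
operator on `Z = 𝔏(H)`. -/
noncomputable def gOp (p u : H →L[ℂ] H) : (H →L[ℂ] H) →L[ℝ] (H →L[ℂ] H) :=
  (1/2 : ℝ) • (ContinuousLinearMap.mul ℝ (H →L[ℂ] H) (p * star u)
    + (ContinuousLinearMap.mul ℝ (H →L[ℂ] H)).flip (star u * p)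
    - ContinuousLinearMap.mul ℝ (H →L[ℂ] H) (u * star p)
    - (ContinuousLinearMap.mul ℝ (H →L[ℂ] H)).flip (star p * u))

/-! Because `p` and `u` are selfadjoint, `g(p,u)` is the inner derivation `z ↦ c z − z c` with
`c = (pu − up)/2` skew-adjoint. Left and right multiplication by `c` commute, so the exponential
factors into left multiplication by `e^c` and right multiplication by `e^{-c}`. As `c` is skew,
`e^c` is unitary, and conjugation by a unitary is a ⋆-automorphism of `𝔏(H)` that carries the range
of every operator isometrically onto the range of its conjugate, so it preserves `M(n,Λ,R)`. -/

open NormedSpace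

section LeftRightMultiplication

variable (𝕜 A : Type*) [NontriviallyNormedField 𝕜] [NormedRing A] [NormedAlgebra 𝕜 A]

noncomputable def mulLeftRingHom : A →+* (A →L[𝕜] A) where
  toFun := ContinuousLinearMap.mul 𝕜 A
  map_one' := by ext; simp
  map_mul' _ _ := by ext; simp [mul_assoc]
  map_zero' := by ext; simp
  map_add' _ _ := by ext; simp

noncomputable def mulRightRingHom : Aᵐᵒᵖ →+* (A →L[𝕜] A) where
  toFun c := (ContinuousLinearMap.mul 𝕜 A).flip c.unop
  map_one' := by ext; simp
  map_mul' _ _ := by ext; simp [mul_assoc]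
  map_zero' := by ext; simp
  map_add' _ _ := by ext; simp

variable {𝕜 A} [NormedAlgebra ℝ 𝕜] [CharZero 𝕜] [CompleteSpace A]

theorem exp_continuousLinearMap_mul (c : A) :
    exp (ContinuousLinearMap.mul 𝕜 A c) = ContinuousLinearMap.mul 𝕜 A (exp c) := by
  let +nondep : NormedAlgebra ℚ A := .restrictScalars ℚ 𝕜 A
  let +nondep : NormedAlgebra ℚ (A →L[𝕜] A) := .restrictScalars ℚ 𝕜 _
  exact (map_exp (mulLeftRingHom 𝕜 A) (ContinuousLinearMap.mul 𝕜 A).continuous c).symm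

theorem exp_continuousLinearMap_mul_flip (c : A) :
    exp ((ContinuousLinearMap.mul 𝕜 A).flip c) = (ContinuousLinearMap.mul 𝕜 A).flip (exp c) := by
  let +nondep : NormedAlgebra ℚ A := .restrictScalars ℚ 𝕜 A
  let +nondep : NormedAlgebra ℚ (A →L[𝕜] A) := .restrictScalars ℚ 𝕜 _
  have hcont : Continuous (mulRightRingHom 𝕜 A) :=
    (ContinuousLinearMap.mul 𝕜 A).flip.continuous.comp MulOpposite.continuous_unop
  rw [← MulOpposite.unop_op (exp c), ← exp_op]
  exact (map_exp (mulRightRingHom 𝕜 A) hcont (MulOpposite.op c)).symm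

theorem exp_continuousLinearMap_mul_sub_mul_flip_apply (c z : A) :
    exp (ContinuousLinearMap.mul 𝕜 A c - (ContinuousLinearMap.mul 𝕜 A).flip c) z
      = exp c * z * exp (-c) := by
  let +nondep : NormedAlgebra ℚ (A →L[𝕜] A) := .restrictScalars ℚ 𝕜 _
  have hcomm : Commute (ContinuousLinearMap.mul 𝕜 A c) (-(ContinuousLinearMap.mul 𝕜 A).flip c) :=
    Commute.neg_right (ContinuousLinearMap.ext fun w => (mul_assoc c w c).symm)
  rw [sub_eq_add_neg, exp_add_of_commute hcomm, ← map_neg, exp_continuousLinearMap_mul,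
    exp_continuousLinearMap_mul_flip]
  simp [mul_assoc]

end LeftRightMultiplication

section UnitaryConjugation

theorem IsOrthProjFamily.map {n : ℕ} {e : Fin n → H →L[ℂ] H} (he : IsOrthProjFamily e)
    {F : Type*} [FunLike F (H →L[ℂ] H) (H →L[ℂ] H)]
    [NonUnitalRingHomClass F (H →L[ℂ] H) (H →L[ℂ] H)] [StarHomClass F (H →L[ℂ] H) (H →L[ℂ] H)]
    (φ : F) :
    IsOrthProjFamily fun k => φ (e k) := by
  obtain ⟨hself, hidem, horth⟩ := he
  exact ⟨fun k => by rw [← map_star, hself], fun k => by rw [← map_mul, hidem],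
    fun j k hjk => by rw [← map_mul, horth j k hjk, map_zero]⟩

theorem range_unitary_conj (u : unitary (H →L[ℂ] H)) (x : H →L[ℂ] H) :
    LinearMap.range (((u : H →L[ℂ] H) * x * star (u : H →L[ℂ] H) : H →L[ℂ] H) : H →ₗ[ℂ] H)
      = (LinearMap.range (x : H →ₗ[ℂ] H)).map
          (Unitary.linearIsometryEquiv u).toLinearEquiv.toLinearMap := by
  have hsurj : LinearMap.range ((star (u : H →L[ℂ] H) : H →L[ℂ] H) : H →ₗ[ℂ] H) = ⊤ :=
    LinearMap.range_eq_top.mpr (Unitary.linearIsometryEquiv (star u)).surjective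
  rw [ContinuousLinearMap.mul_def, ContinuousLinearMap.mul_def,
    ContinuousLinearMap.toLinearMap_comp, LinearMap.range_comp_of_range_eq_top _ hsurj,
    ContinuousLinearMap.toLinearMap_comp, LinearMap.range_comp]
  rfl

variable {n : ℕ} {Λ : Fin n → ℂ} {R : Fin n → ℕ}

theorem MemberM.unitary_conj (u : unitary (H →L[ℂ] H)) {x : H →L[ℂ] H}
    (hx : MemberM n Λ R x) : MemberM n Λ R ((u : H →L[ℂ] H) * x * star (u : H →L[ℂ] H)) := by
  obtain ⟨e, he, hrank, rfl⟩ := hx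
  refine ⟨fun k => u * e k * star (u : H →L[ℂ] H),
    he.map (Unitary.conjStarAlgAut ℂ (H →L[ℂ] H) u), fun k => ?_, ?_⟩
  · obtain ⟨hfin, hfinrank⟩ := hrank k
    rw [range_unitary_conj, LinearEquiv.finrank_map_eq]
    exact ⟨inferInstance, hfinrank⟩
  · simp only [Finset.mul_sum, Finset.sum_mul, mul_smul_comm, smul_mul_assoc]

theorem bijOn_unitary_conj_memberM (u : unitary (H →L[ℂ] H)) :
    Set.BijOn (fun z => (u : H →L[ℂ] H) * z * star (u : H →L[ℂ] H))
      {x | MemberM n Λ R x} {x | MemberM n Λ R x} := by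
  refine Set.InvOn.bijOn ⟨fun z _ => ?_, fun z _ => ?_⟩ (fun x hx => hx.unitary_conj u)
    (fun x hx => by simpa using hx.unitary_conj (star u))
  · simp [← mul_assoc, mul_assoc _ _ (u : H →L[ℂ] H)]
  · simp [← mul_assoc, mul_assoc _ _ (star (u : H →L[ℂ] H))]

end UnitaryConjugation

theorem commutator_mem_skewAdjoint {A : Type*} [Ring A] [StarRing A] {p u : A}
    (hp : IsSelfAdjoint p) (hu : IsSelfAdjoint u) : p * u - u * p ∈ skewAdjoint A := by
  rw [skewAdjoint.mem_iff, star_sub, star_mul, star_mul, hp.star_eq, hu.star_eq, neg_sub]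

theorem gOp_eq_mul_sub_mul_flip {p u : H →L[ℂ] H} (hp : IsSelfAdjoint p) (hu : IsSelfAdjoint u) :
    gOp p u = ContinuousLinearMap.mul ℝ _ ((1/2 : ℂ) • (p * u - u * p))
      - (ContinuousLinearMap.mul ℝ _).flip ((1/2 : ℂ) • (p * u - u * p)) := by
  ext1 z
  rw [show (1/2 : ℂ) = ((1/2 : ℝ) : ℂ) by norm_num]
  simp only [gOp, hp.star_eq, hu.star_eq, sub_apply, add_apply, smul_apply,
    ContinuousLinearMap.mul_apply', ContinuousLinearMap.flip_apply, Complex.coe_smul,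
    smul_mul_assoc, mul_smul_comm, ← smul_sub]
  congr 1
  noncomm_ring

theorem exp_g_is_unitary_conjugation_general
    (n : ℕ) (Λ : Fin n → ℂ) (R : Fin n → ℕ)
    (e : Fin n → H →L[ℂ] H) (he : IsOrthProjFamily e)
    (p : H →L[ℂ] H) (hp : p = ∑ k, e k)
    (u : H →L[ℂ] H) (hus : star u = u)
    (c : H →L[ℂ] H) (hc : c = (1/2 : ℂ) • (p * u - u * p)) :
    star c = -c ∧
    star (NormedSpace.exp c) * NormedSpace.exp c = 1 ∧
    NormedSpace.exp c * star (NormedSpace.exp c) = 1 ∧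
    (∀ z : H →L[ℂ] H, (NormedSpace.exp (gOp p u)) z
        = NormedSpace.exp c * z * NormedSpace.exp (-c)) ∧
    Set.BijOn (fun z => (NormedSpace.exp (gOp p u)) z)
      {x : H →L[ℂ] H | MemberM n Λ R x} {x : H →L[ℂ] H | MemberM n Λ R x} := by
  let +nondep : NormedAlgebra ℚ (H →L[ℂ] H) := .restrictScalars ℚ ℂ _
  have hp_sa : IsSelfAdjoint p := hp ▸ isSelfAdjoint_sum _ fun k _ => he.1 k
  have hc_skew : c ∈ skewAdjoint (H →L[ℂ] H) := by
    rw [hc, skewAdjoint.mem_iff, star_smul,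
      skewAdjoint.mem_iff.mp (commutator_mem_skewAdjoint hp_sa hus), smul_neg]
    norm_num
  have hexp_unitary := exp_mem_unitary_of_mem_skewAdjoint hc_skew
  have hconj (z : H →L[ℂ] H) : exp (gOp p u) z = exp c * z * exp (-c) := by
    rw [gOp_eq_mul_sub_mul_flip hp_sa hus, ← hc, exp_continuousLinearMap_mul_sub_mul_flip_apply]
  have hstar : star (exp c) = exp (-c) := by rw [star_exp, skewAdjoint.mem_iff.mp hc_skew]
  refine ⟨skewAdjoint.mem_iff.mp hc_skew, Unitary.star_mul_self_of_mem hexp_unitary,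
    Unitary.mul_star_self_of_mem hexp_unitary, hconj, ?_⟩
  simpa only [hconj, hstar] using bijOn_unitary_conj_memberM ⟨exp c, hexp_unitary⟩

/-- For `a ∈ M(n,Λ,R)` with support `p` and a selfadjoint
`u ∈ Z_{1/2}(p)`, the element `c = (pu − up)/2` is skew-adjoint, `e^c` is unitary,
`h = exp(g(p,u))` acts by `z ↦ e^c z e^{−c}`, and `h` maps `M(n,Λ,R)` bijectively onto
itself. -/
theorem exp_g_is_unitary_conjugation
    (n : ℕ) (hn : 1 ≤ n) (Λ : Fin n → ℂ) (R : Fin n → ℕ)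
    (hΛ0 : ∀ k, Λ k ≠ 0) (hΛinj : Function.Injective Λ) (hR : ∀ k, 0 < R k)
    (e : Fin n → H →L[ℂ] H) (he : IsOrthProjFamily e)
    (herank : ∀ k, FiniteDimensional ℂ (LinearMap.range ((e k) : H →ₗ[ℂ] H)) ∧
      Module.finrank ℂ (LinearMap.range ((e k) : H →ₗ[ℂ] H)) = R k)
    (a p : H →L[ℂ] H) (ha : a = ∑ k, Λ k • e k) (hp : p = ∑ k, e k)
    (u : H →L[ℂ] H) (hu : p * u + u * p = u) (hus : star u = u)
    (c : H →L[ℂ] H) (hc : c = (1/2 : ℂ) • (p * u - u * p)) :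
    star c = -c ∧
    star (NormedSpace.exp c) * NormedSpace.exp c = 1 ∧
    NormedSpace.exp c * star (NormedSpace.exp c) = 1 ∧
    (∀ z : H →L[ℂ] H, (NormedSpace.exp (gOp p u)) z
        = NormedSpace.exp c * z * NormedSpace.exp (-c)) ∧
    Set.BijOn (fun z => (NormedSpace.exp (gOp p u)) z)
      {x : H →L[ℂ] H | MemberM n Λ R x} {x : H →L[ℂ] H | MemberM n Λ R x} :=
  exp_g_is_unitary_conjugation_general n Λ R e he p hp u hus c hc
end
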